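/- arXiv:1811.08021 — 2 statements merged into one kernel-verified Lean document; each statement's English description precedes it below -/
import Mathlib

section
/- Let $[x_k]_{k=0}^N$ be defined by $x_N = e_N$, $x_0 = G_{0,N} x_N + e_0$, and $x_k = G_{k,k-1} x_{k-1} + G_{k,N} x_N + e_k$ for $k \in [1,N-1]$, where $[e_k]$ are independent zero-mean Gaussian vectors with positive definite covariances. Then conditioned on $x_N$, the sequence $[x_k]_{k=0}^{N-1}$ is Markov; i.e., $[x_k]$ is $CM_L$. -/
open MeasureTheory ProbabilityTheory Matrix

noncomputable def gaussianPDF {ι : Type*} [Fintype ι] [DecidableEq ι]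
    (μ : ι → ℝ) (S : Matrix ι ι ℝ) (x : ι → ℝ) : ℝ :=
  (Real.sqrt ((2 * Real.pi) ^ (Fintype.card ι) * S.det))⁻¹ *
    Real.exp (-(1 / 2) * ((x - μ) ⬝ᵥ S⁻¹ *ᵥ (x - μ)))

/-- \$M_{N|k} = M_{N,N-1} ⋯ M_{k+1,k}\$ (with \$M_{N|N} = I\$), where \$F n = M_{n,n-1}\$. -/
noncomputable def Mtrans {d : ℕ} (F : ℕ → Matrix (Fin d) (Fin d) ℝ) (N k : ℕ) :
    Matrix (Fin d) (Fin d) ℝ :=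
  (((List.Ico (k + 1) (N + 1)).reverse).map F).prod

/-- \$C_{N|k} = ∑_{n=k}^{N-1} M_{N|n+1} M_{n+1} M_{N|n+1}^T\$. -/
noncomputable def Ctrans {d : ℕ} (F M : ℕ → Matrix (Fin d) (Fin d) ℝ) (N k : ℕ) :
    Matrix (Fin d) (Fin d) ℝ :=
  ∑ n ∈ Finset.Ico k N, Mtrans F N (n + 1) * M (n + 1) * (Mtrans F N (n + 1))ᵀ

noncomputable def marg {d N : ℕ} (p : (Fin (N + 1) → (Fin d → ℝ)) → ℝ)
    (S : Finset (Fin (N + 1))) (x : Fin (N + 1) → (Fin d → ℝ)) : ℝ :=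
  ∫ y : {i : Fin (N + 1) // i ∉ S} → (Fin d → ℝ),
    p (fun i => if h : i ∈ S then x i else y ⟨i, h⟩)

def IsMarkov {d N : ℕ} (p : (Fin (N + 1) → (Fin d → ℝ)) → ℝ) : Prop :=
  ∀ j k : Fin (N + 1), j < k → ∀ x,
    marg p (insert k (Finset.Iic j)) x * marg p {j} x
      = marg p {j, k} x * marg p (Finset.Iic j) x

def IsCML {d N : ℕ} (p : (Fin (N + 1) → (Fin d → ℝ)) → ℝ) : Prop :=
  ∀ j k : Fin (N + 1), j < k → k < Fin.last N → ∀ x,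
    marg p (insert k (insert (Fin.last N) (Finset.Iic j))) x * marg p {j, Fin.last N} x
      = marg p {j, k, Fin.last N} x * marg p (insert (Fin.last N) (Finset.Iic j)) x

/-- Joint density of the Gaussian Markov model \$x_0 = e_0\$, \$x_k = M_{k,k-1}x_{k-1} + e_k\$
with \$e_k ∼ N(0, M_k)\$ (where \$F k = M_{k,k-1}\$). -/
noncomputable def markovDensity {d N : ℕ} (F M : ℕ → Matrix (Fin d) (Fin d) ℝ)
    (x : Fin (N + 1) → (Fin d → ℝ)) : ℝ :=
  gaussianPDF 0 (M 0) (x 0) *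
    ∏ k : Fin N, gaussianPDF ((F (k.val + 1)) *ᵥ x k.castSucc) (M (k.val + 1)) (x k.succ)

/-- Joint density of the \$CM_L\$ model \$x_N = e_N\$, \$x_0 = G_{0,N}x_N + e_0\$,
\$x_k = G_{k,k-1}x_{k-1} + G_{k,N}x_N + e_k\$, with white Gaussian noise
\$e_N ∼ N(0, G_N)\$, \$e_0 ∼ N(0, G_0)\$, \$e_k ∼ N(0, G_k)\$. -/
noncomputable def cmlDensity {d N : ℕ} (G0N : Matrix (Fin d) (Fin d) ℝ)
    (Gkk1 GkN : ℕ → Matrix (Fin d) (Fin d) ℝ)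
    (Gc0 GcN : Matrix (Fin d) (Fin d) ℝ) (Gc : ℕ → Matrix (Fin d) (Fin d) ℝ)
    (x : Fin (N + 1) → (Fin d → ℝ)) : ℝ :=
  gaussianPDF 0 GcN (x (Fin.last N)) *
    gaussianPDF (G0N *ᵥ x (Fin.last N)) Gc0 (x 0) *
    ∏ j : Fin (N - 1),
      gaussianPDF
        (Gkk1 (j.val + 1) *ᵥ x ⟨j.val, by have := j.isLt; omega⟩
          + GkN (j.val + 1) *ᵥ x (Fin.last N))
        (Gc (j.val + 1)) (x ⟨j.val + 1, by have := j.isLt; omega⟩)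

/-!
Fix `j`. The density factors as `past j * future j`, where `past j` collects the
factors of `x_N`, `x_0` and the transitions into `x_1, …, x_j`, and so depends only on
`x_0, …, x_j, x_N`, while `future j` collects the transitions out of `x_j, …, x_{N-2}`
and depends only on `x_j, …, x_N`. The two groups of variables overlap exactly in
`{x_j, x_N}`, so by Fubini every marginal of the density that keeps `x_j` and `x_N`
splits into a marginal of `past j` times a marginal of `future j`. For `j < k < N` both
sides of the $CM_L$ identity then become the same product of four factors.
-/

open Finset

theorem DependsOn.finset_prod {ι κ β : Type*} {α : ι → Type*} [CommMonoid β] {s : Set ι}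
    {t : Finset κ} {f : κ → (Π i, α i) → β} (hf : ∀ k ∈ t, DependsOn (f k) s) :
    DependsOn (fun y => ∏ k ∈ t, f k y) s :=
  fun _ _ h => prod_congr rfl fun k hk => hf k hk h

section PiIntegral

variable {E : Type*} [MeasureSpace E] [SigmaFinite (volume : Measure E)]

theorem integral_pi_mul_subtype {ι : Type*} [Fintype ι] (P : ι → Prop) [DecidablePred P]
    (f : ({i // P i} → E) → ℝ) (g : ({i // ¬P i} → E) → ℝ) :
    ∫ y : ι → E, f (fun i => y i) * g (fun i => y i) = (∫ a, f a) * ∫ b, g b := by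
  have := (volume_preserving_piEquivPiSubtypeProd (fun _ => E) P).integral_comp'
    (fun z => f z.1 * g z.2)
  rwa [Measure.volume_eq_prod, integral_prod_mul] at this

theorem integral_pi_comp_equiv {ι κ : Type*} [Fintype ι] [Fintype κ] (e : ι ≃ κ)
    (f : (ι → E) → ℝ) :
    ∫ b : κ → E, f (fun a => b (e a)) = ∫ a, f a :=
  ((volume_measurePreserving_piCongrLeft (fun _ => E) e).symm _).integral_comp' f

end PiIntegral

section Marginal

variable {d N : ℕ}

theorem marg_mul_of_dependsOn_left (p q : (Fin (N + 1) → (Fin d → ℝ)) → ℝ)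
    {S : Finset (Fin (N + 1))} (hp : DependsOn p S) (x : Fin (N + 1) → (Fin d → ℝ)) :
    marg (fun y => p y * q y) S x = p x * marg q S x := by
  rw [marg, marg, ← integral_const_mul]
  congr with y
  congr 1
  exact hp fun i hi => dif_pos hi

theorem marg_eq_integral_equiv (p : (Fin (N + 1) → (Fin d → ℝ)) → ℝ)
    (U : Finset (Fin (N + 1))) {ι : Type*} [Fintype ι] (e : ι ≃ {i // i ∉ U})
    (x : Fin (N + 1) → (Fin d → ℝ)) :
    marg p U x = ∫ a : ι → (Fin d → ℝ),
      p (fun i => if h : i ∈ U then x i else a (e.symm ⟨i, h⟩)) := by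
  rw [marg, ← integral_pi_comp_equiv e.symm]

theorem marg_mul_of_dependsOn (p q : (Fin (N + 1) → (Fin d → ℝ)) → ℝ)
    {T U : Finset (Fin (N + 1))} (hp : DependsOn p T) (hq : DependsOn q U)
    (hTU : T ∪ U = univ) (x : Fin (N + 1) → (Fin d → ℝ)) :
    marg (fun y => p y * q y) (T ∩ U) x = marg p U x * marg q T x := by
  classical
  have hU : ∀ {i}, i ∉ U → i ∉ T ∩ U := fun h hi => h (mem_inter.1 hi).2
  have hT : ∀ i, i ∉ T ∩ U ∧ ¬i ∉ U ↔ i ∉ T := by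
    intro i
    have hi := mem_union.1 (hTU ▸ mem_univ i)
    rw [mem_inter]
    tauto
  let e₁ := Equiv.subtypeSubtypeEquivSubtype (p := (· ∉ T ∩ U)) hU
  let e₂ := (Equiv.subtypeSubtypeEquivSubtypeInter (· ∉ T ∩ U) (¬· ∉ U)).trans
    (Equiv.subtypeEquivRight hT)
  rw [marg_eq_integral_equiv p U e₁, marg_eq_integral_equiv q T e₂, marg,
    ← integral_pi_mul_subtype (ι := {i // i ∉ T ∩ U}) (fun j => j.1 ∉ U)]
  congr with y
  congr 1
  · refine hp fun i hi => ?_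
    by_cases hiU : i ∈ U
    · rw [dif_pos hiU, dif_pos (mem_inter.2 ⟨hi, hiU⟩)]
    · rw [dif_neg hiU, dif_neg (hU hiU)]
      rfl
  · refine hq fun i hi => ?_
    by_cases hiT : i ∈ T
    · rw [dif_pos hiT, dif_pos (mem_inter.2 ⟨hiT, hi⟩)]
    · rw [dif_neg hiT, dif_neg fun h => hiT (mem_inter.1 h).1]
      rfl

end Marginal

section IndexSets

variable {N : ℕ}

theorem insert_last_Iic_union_Ici (j : Fin (N + 1)) :
    insert (Fin.last N) (Iic j) ∪ Ici j = univ := by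
  ext i
  simp only [mem_union, mem_insert, mem_Iic, mem_Ici, mem_univ, iff_true]
  exact (le_total i j).elim (fun h => Or.inl (Or.inr h)) Or.inr

theorem insert_insert_last_Iic_union_Ici (j k : Fin (N + 1)) :
    insert k (insert (Fin.last N) (Iic j)) ∪ Ici j = univ := by
  rw [insert_union, insert_last_Iic_union_Ici, insert_eq_of_mem (mem_univ k)]

theorem insert_last_Iic_inter_Ici (j : Fin (N + 1)) :
    insert (Fin.last N) (Iic j) ∩ Ici j = {j, Fin.last N} := by
  ext i
  simp only [mem_inter, mem_insert, mem_Iic, mem_Ici, mem_singleton, Fin.ext_iff,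
    Fin.le_def, Fin.val_last]
  have := i.isLt
  omega

theorem insert_insert_last_Iic_inter_Ici {j k : Fin (N + 1)} (hjk : j ≤ k) :
    insert k (insert (Fin.last N) (Iic j)) ∩ Ici j = {j, k, Fin.last N} := by
  ext i
  simp only [mem_inter, mem_insert, mem_Iic, mem_Ici, mem_singleton, Fin.ext_iff,
    Fin.le_def, Fin.val_last]
  have := i.isLt
  have : j.val ≤ k.val := hjk
  omega

end IndexSets

section CMLModel

variable {d N : ℕ} (G0N : Matrix (Fin d) (Fin d) ℝ) (Gkk1 GkN : ℕ → Matrix (Fin d) (Fin d) ℝ)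
  (Gc0 GcN : Matrix (Fin d) (Fin d) ℝ) (Gc : ℕ → Matrix (Fin d) (Fin d) ℝ)

noncomputable def cmlTransition (y : Fin (N + 1) → (Fin d → ℝ)) (i : Fin (N - 1)) : ℝ :=
  gaussianPDF
    (Gkk1 (i.val + 1) *ᵥ y ⟨i.val, by have := i.isLt; omega⟩
      + GkN (i.val + 1) *ᵥ y (Fin.last N))
    (Gc (i.val + 1)) (y ⟨i.val + 1, by have := i.isLt; omega⟩)

noncomputable def cmlPast (j : Fin (N + 1)) (y : Fin (N + 1) → (Fin d → ℝ)) : ℝ :=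
  gaussianPDF 0 GcN (y (Fin.last N)) * gaussianPDF (G0N *ᵥ y (Fin.last N)) Gc0 (y 0) *
    ∏ i with i.val + 1 ≤ j.val, cmlTransition Gkk1 GkN Gc y i

noncomputable def cmlFuture (j : Fin (N + 1)) (y : Fin (N + 1) → (Fin d → ℝ)) : ℝ :=
  ∏ i with ¬i.val + 1 ≤ j.val, cmlTransition Gkk1 GkN Gc y i

theorem cmlDensity_eq_past_mul_future (j : Fin (N + 1)) :
    cmlDensity (N := N) G0N Gkk1 GkN Gc0 GcN Gc
      = fun y => cmlPast G0N Gkk1 GkN Gc0 GcN Gc j y * cmlFuture Gkk1 GkN Gc j y := by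
  ext y
  rw [cmlDensity, cmlPast, cmlFuture, mul_assoc (_ * _), prod_filter_mul_prod_filter_not]
  rfl

theorem dependsOn_cmlTransition (i : Fin (N - 1)) :
    DependsOn (cmlTransition Gkk1 GkN Gc · i)
      {⟨i.val, by have := i.isLt; omega⟩, ⟨i.val + 1, by have := i.isLt; omega⟩,
        Fin.last N} := by
  intro y z h
  simp only [Set.mem_insert_iff, Set.mem_singleton_iff, forall_eq_or_imp, forall_eq] at h
  obtain ⟨h₀, h₁, hN⟩ := h
  dsimp only
  rw [cmlTransition, cmlTransition, h₀, h₁, hN]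

theorem dependsOn_cmlPast (j : Fin (N + 1)) :
    DependsOn (cmlPast G0N Gkk1 GkN Gc0 GcN Gc j) (insert (Fin.last N) (Iic j) : Finset _) := by
  intro y z h
  have hN : y (Fin.last N) = z (Fin.last N) := h _ (by simp)
  have h₀ : y 0 = z 0 := h _ (by simp)
  rw [cmlPast, cmlPast, hN, h₀]
  refine congrArg _ (prod_congr rfl fun i hi => dependsOn_cmlTransition Gkk1 GkN Gc i
    fun l hl => h l ?_)
  rw [mem_filter] at hi
  simp only [Set.mem_insert_iff, Set.mem_singleton_iff] at hl
  simp only [coe_insert, coe_Iic, Set.mem_insert_iff, Set.mem_Iic]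
  rcases hl with rfl | rfl | rfl <;> simp [Fin.le_def] <;> omega

theorem dependsOn_cmlFuture (j : Fin (N + 1)) :
    DependsOn (cmlFuture Gkk1 GkN Gc j) (Ici j : Finset _) := by
  refine DependsOn.finset_prod fun i hi => (dependsOn_cmlTransition Gkk1 GkN Gc i).mono ?_
  rw [mem_filter] at hi
  intro l hl
  simp only [Set.mem_insert_iff, Set.mem_singleton_iff] at hl
  rw [coe_Ici, Set.mem_Ici]
  rcases hl with rfl | rfl | rfl <;> simp [Fin.le_def] <;> omega

end CMLModel

theorem cml_model_is_CML_general {d N : ℕ} (G0N : Matrix (Fin d) (Fin d) ℝ)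
    (Gkk1 GkN : ℕ → Matrix (Fin d) (Fin d) ℝ)
    (Gc0 GcN : Matrix (Fin d) (Fin d) ℝ) (Gc : ℕ → Matrix (Fin d) (Fin d) ℝ) :
    IsCML (cmlDensity (N := N) G0N Gkk1 GkN Gc0 GcN Gc) := by
  intro j k hjk _ x
  have hpast := dependsOn_cmlPast G0N Gkk1 GkN Gc0 GcN Gc j
  have hfuture := dependsOn_cmlFuture Gkk1 GkN Gc j
  have hpast' := hpast.mono (coe_subset.2 (subset_insert k _))
  rw [cmlDensity_eq_past_mul_future G0N Gkk1 GkN Gc0 GcN Gc j,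
    marg_mul_of_dependsOn_left _ _ hpast', marg_mul_of_dependsOn_left _ _ hpast,
    ← insert_insert_last_Iic_inter_Ici hjk.le, ← insert_last_Iic_inter_Ici,
    marg_mul_of_dependsOn _ _ hpast' hfuture (insert_insert_last_Iic_union_Ici j k),
    marg_mul_of_dependsOn _ _ hpast hfuture (insert_last_Iic_union_Ici j)]
  ring

/-- Any sequence generated by the $CM_L$ model (with independent zero-mean Gaussian
noises of positive definite covariances) is $CM_L$: conditioned on $x_N$,
$[x_k]_0^{N-1}$ is Markov. -/
theorem cml_model_is_CML {d N : ℕ} (G0N : Matrix (Fin d) (Fin d) ℝ)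
    (Gkk1 GkN : ℕ → Matrix (Fin d) (Fin d) ℝ)
    (Gc0 GcN : Matrix (Fin d) (Fin d) ℝ) (Gc : ℕ → Matrix (Fin d) (Fin d) ℝ)
    (hGc0 : Gc0.PosDef) (hGcN : GcN.PosDef) (hGc : ∀ k, (Gc k).PosDef) :
    IsCML (cmlDensity (N := N) G0N Gkk1 GkN Gc0 GcN Gc) :=
  cml_model_is_CML_general G0N Gkk1 GkN Gc0 GcN Gc
end

section
/- Define $G_k = (M_k^{-1} + M_{N|k}' C_{N|k}^{-1} M_{N|k})^{-1}$, $G_{k,N} = G_k M_{N|k}' C_{N|k}^{-1}$, and $G_{k+1,k} = M_{k+1,k} - G_{k+1,N} M_{N|k} $, where $M_{N|k} = M_{N,N-1}\cdots M_{k+1,k}$, $C_{N|k} = \sum_{n=k}^{N-1} M_{N|n+1} M_{n+1} M_{N|n+1}'$, with all $M_n$ positive definite. Then the reciprocal condition $G_k^{-1} G_{k,N} = G_{k+1,k}' G_{k+1}^{-1} G_{k+1,N}$ holds for all $k \in [1, N-2]$. -/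
open MeasureTheory ProbabilityTheory Matrix

/-- $G_k = (M_k^{-1} + M_{N|k}' C_{N|k}^{-1} M_{N|k})^{-1}$ of the induced $CM_L$ model. -/
noncomputable def Gcov {d : ℕ} (F M : ℕ → Matrix (Fin d) (Fin d) ℝ) (N k : ℕ) :
    Matrix (Fin d) (Fin d) ℝ :=
  ((M k)⁻¹ + (Mtrans F N k)ᵀ * (Ctrans F M N k)⁻¹ * Mtrans F N k)⁻¹

/-- $G_{k,N} = G_k M_{N|k}' C_{N|k}^{-1}$ of the induced $CM_L$ model. -/
noncomputable def GkN {d : ℕ} (F M : ℕ → Matrix (Fin d) (Fin d) ℝ) (N k : ℕ) :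
    Matrix (Fin d) (Fin d) ℝ :=
  Gcov F M N k * (Mtrans F N k)ᵀ * (Ctrans F M N k)⁻¹

/-!
Write `B = M_{N|k+1}`, so that `M_{N|k} = B M_{k+1,k}` and `C_{N|k} = B M_{k+1} B' + C_{N|k+1}`.
The left side is `M_{N|k}' C_{N|k}⁻¹`, and `G_{k+1,k} = G_{k+1} M_{k+1}⁻¹ M_{k+1,k}`, so the right
side is `M_{k+1,k}' M_{k+1}⁻¹ G_{k+1,N}`. The push-through identity turns
`G_{k+1,N} = (M_{k+1}⁻¹ + B' C_{N|k+1}⁻¹ B)⁻¹ B' C_{N|k+1}⁻¹` into `M_{k+1} B' C_{N|k}⁻¹`,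
and both sides become `M_{k+1,k}' B' C_{N|k}⁻¹`.
-/

/-- The push-through identity, a companion of the Woodbury identity
`Matrix.add_mul_mul_inv_eq_sub`. -/
theorem Matrix.inv_add_mul_inv_mul_mul_inv_eq {m n R : Type*} [Fintype m] [Fintype n]
    [DecidableEq m] [DecidableEq n] [CommRing R]
    {P : Matrix n n R} {U : Matrix n m R} {Q : Matrix m m R} {V : Matrix m n R}
    (hP : IsUnit P) (hQ : IsUnit Q) (hY : IsUnit (P⁻¹ + U * Q⁻¹ * V))
    (hS : IsUnit (V * P * U + Q)) :
    (P⁻¹ + U * Q⁻¹ * V)⁻¹ * U * Q⁻¹ = P * U * (V * P * U + Q)⁻¹ := by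
  obtain ⟨_⟩ := hP.nonempty_invertible
  obtain ⟨_⟩ := hQ.nonempty_invertible
  obtain ⟨_⟩ := hY.nonempty_invertible
  obtain ⟨_⟩ := hS.nonempty_invertible
  have key : (P⁻¹ + U * Q⁻¹ * V) * (P * U) = U * Q⁻¹ * (V * P * U + Q) := by
    simp only [Matrix.add_mul, Matrix.mul_add, Matrix.mul_assoc,
      Matrix.inv_mul_cancel_left_of_invertible, Matrix.inv_mul_of_invertible, Matrix.mul_one,
      add_comm]
  calc (P⁻¹ + U * Q⁻¹ * V)⁻¹ * U * Q⁻¹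
      = (P⁻¹ + U * Q⁻¹ * V)⁻¹ * (U * Q⁻¹ * (V * P * U + Q)) * (V * P * U + Q)⁻¹ := by
        rw [Matrix.mul_assoc _ _ (V * P * U + Q)⁻¹, Matrix.mul_assoc (U * Q⁻¹),
          Matrix.mul_inv_of_invertible, Matrix.mul_one, Matrix.mul_assoc]
    _ = P * U * (V * P * U + Q)⁻¹ := by
        rw [← key, Matrix.inv_mul_cancel_left_of_invertible]

theorem Matrix.PosSemidef.mul_mul_transpose_same {m n R : Type*} [Finite m] [Fintype n] [Ring R]
    [PartialOrder R] [StarRing R] [TrivialStar R] {A : Matrix n n R} (hA : A.PosSemidef)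
    (B : Matrix m n R) : (B * A * Bᵀ).PosSemidef := by
  simpa [conjTranspose_eq_transpose_of_trivial] using hA.mul_mul_conjTranspose_same B

theorem Matrix.PosSemidef.transpose_mul_mul_same {m n R : Type*} [Finite m] [Fintype n] [Ring R]
    [PartialOrder R] [StarRing R] [TrivialStar R] {A : Matrix n n R} (hA : A.PosSemidef)
    (B : Matrix n m R) : (Bᵀ * A * B).PosSemidef := by
  simpa [conjTranspose_eq_transpose_of_trivial] using hA.conjTranspose_mul_mul_same B

theorem Matrix.PosDef.transpose_eq {n R : Type*} [Ring R] [PartialOrder R] [StarRing R]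
    [TrivialStar R] {A : Matrix n n R} (hA : A.PosDef) : Aᵀ = A :=
  (isHermitian_iff_isSymm.mp hA.isHermitian).eq

section InducedModel

variable {d N : ℕ} (F M : ℕ → Matrix (Fin d) (Fin d) ℝ)

lemma Mtrans_self : Mtrans F N N = 1 := by
  simp [Mtrans]

lemma Mtrans_eq_Mtrans_succ_mul {k : ℕ} (hk : k < N) :
    Mtrans F N k = Mtrans F N (k + 1) * F (k + 1) := by
  rw [Mtrans, List.Ico.eq_cons (by omega : k + 1 < N + 1)]
  simp [Mtrans]

lemma Ctrans_eq_add_Ctrans_succ {k : ℕ} (hk : k < N) :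
    Ctrans F M N k
      = Mtrans F N (k + 1) * M (k + 1) * (Mtrans F N (k + 1))ᵀ + Ctrans F M N (k + 1) := by
  rw [Ctrans, Finset.sum_eq_sum_Ico_succ_bot hk, Ctrans]

variable {F M}

lemma posSemidef_Ctrans (hM : ∀ n, (M n).PosSemidef) (k : ℕ) :
    (Ctrans F M N k).PosSemidef :=
  posSemidef_sum _ fun n _ => (hM (n + 1)).mul_mul_transpose_same _

lemma posDef_Ctrans (hM : ∀ n, (M n).PosSemidef) (hMN : (M N).PosDef) {k : ℕ} (hk : k < N) :
    (Ctrans F M N k).PosDef := by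
  obtain ⟨N, rfl⟩ : ∃ m, N = m + 1 := ⟨N - 1, by omega⟩
  rw [Ctrans, Finset.sum_Ico_succ_top (by omega), Mtrans_self, transpose_one, Matrix.one_mul,
    Matrix.mul_one]
  exact PosDef.posSemidef_add
    (posSemidef_sum _ fun n _ => (hM (n + 1)).mul_mul_transpose_same _) hMN

lemma posDef_inv_Gcov {k : ℕ} (hMk : (M k).PosDef) (hM : ∀ n, (M n).PosSemidef) :
    ((M k)⁻¹ + (Mtrans F N k)ᵀ * (Ctrans F M N k)⁻¹ * Mtrans F N k).PosDef :=
  hMk.inv.add_posSemidef ((posSemidef_Ctrans hM k).inv.transpose_mul_mul_same _)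

lemma posDef_Gcov {k : ℕ} (hMk : (M k).PosDef) (hM : ∀ n, (M n).PosSemidef) :
    (Gcov F M N k).PosDef :=
  (posDef_inv_Gcov hMk hM).inv

lemma inv_Gcov {k : ℕ} (hMk : (M k).PosDef) (hM : ∀ n, (M n).PosSemidef) :
    (Gcov F M N k)⁻¹ = (M k)⁻¹ + (Mtrans F N k)ᵀ * (Ctrans F M N k)⁻¹ * Mtrans F N k :=
  nonsing_inv_nonsing_inv _ ((posDef_inv_Gcov hMk hM).det_pos.ne'.isUnit)

lemma inv_Gcov_mul_GkN {k : ℕ} (hMk : (M k).PosDef) (hM : ∀ n, (M n).PosSemidef) :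
    (Gcov F M N k)⁻¹ * GkN F M N k = (Mtrans F N k)ᵀ * (Ctrans F M N k)⁻¹ := by
  rw [GkN, Matrix.mul_assoc, nonsing_inv_mul_cancel_left _ _
    (posDef_Gcov hMk hM).det_pos.ne'.isUnit]

lemma GkN_mul_Mtrans {k : ℕ} (hMk : (M k).PosDef) (hM : ∀ n, (M n).PosSemidef) :
    GkN F M N k * Mtrans F N k = 1 - Gcov F M N k * (M k)⁻¹ := by
  have hG : IsUnit (Gcov F M N k).det := (posDef_Gcov hMk hM).det_pos.ne'.isUnit
  have hquad : (Mtrans F N k)ᵀ * (Ctrans F M N k)⁻¹ * Mtrans F N k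
      = (Gcov F M N k)⁻¹ - (M k)⁻¹ := by
    rw [inv_Gcov hMk hM, add_sub_cancel_left]
  rw [GkN, Matrix.mul_assoc, Matrix.mul_assoc, ← Matrix.mul_assoc (Mtrans F N k)ᵀ, hquad,
    Matrix.mul_sub, mul_nonsing_inv _ hG]

lemma sub_GkN_mul_Mtrans {k : ℕ} (hk : k < N) (hMk : (M (k + 1)).PosDef)
    (hM : ∀ n, (M n).PosSemidef) :
    F (k + 1) - GkN F M N (k + 1) * Mtrans F N k
      = Gcov F M N (k + 1) * (M (k + 1))⁻¹ * F (k + 1) := by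
  rw [Mtrans_eq_Mtrans_succ_mul F hk, ← Matrix.mul_assoc, GkN_mul_Mtrans hMk hM, Matrix.sub_mul,
    Matrix.one_mul, sub_sub_cancel]

lemma GkN_succ {k : ℕ} (hk : k + 1 < N) (hM : ∀ n, (M n).PosDef) :
    GkN F M N (k + 1) = M (k + 1) * (Mtrans F N (k + 1))ᵀ * (Ctrans F M N k)⁻¹ := by
  have hPSD n := (hM n).posSemidef
  rw [Ctrans_eq_add_Ctrans_succ F M (by omega : k < N), GkN, Gcov]
  refine inv_add_mul_inv_mul_mul_inv_eq (hM _).isUnit (posDef_Ctrans hPSD (hM N) hk).isUnit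
    (posDef_inv_Gcov (hM _) hPSD).isUnit ?_
  rw [← Ctrans_eq_add_Ctrans_succ F M (by omega)]
  exact (posDef_Ctrans hPSD (hM N) (by omega)).isUnit

end InducedModel

/-- The $CM_L$ model induced by a Markov model satisfies the reciprocal parameter
condition $G_k^{-1} G_{k,N} = G_{k+1,k}' G_{k+1}^{-1} G_{k+1,N}$ for $k ∈ [1,N-2]$,
where $G_{k+1,k} = M_{k+1,k} - G_{k+1,N} M_{N|k}$. -/
theorem induced_model_reciprocal_condition {d N : ℕ}
    (F M : ℕ → Matrix (Fin d) (Fin d) ℝ) (hM : ∀ k, (M k).PosDef) :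
    ∀ k : ℕ, 1 ≤ k → k ≤ N - 2 →
      (Gcov F M N k)⁻¹ * GkN F M N k
        = (F (k + 1) - GkN F M N (k + 1) * Mtrans F N k)ᵀ
            * (Gcov F M N (k + 1))⁻¹ * GkN F M N (k + 1) := by
  intro k _ hk
  have hkN : k + 1 < N := by omega
  have hPSD n := (hM n).posSemidef
  have hG := posDef_Gcov (F := F) (N := N) (hM (k + 1)) hPSD
  have hGdet : IsUnit (Gcov F M N (k + 1)).det := hG.det_pos.ne'.isUnit
  have hMdet : IsUnit (M (k + 1)).det := (hM (k + 1)).det_pos.ne'.isUnit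
  calc (Gcov F M N k)⁻¹ * GkN F M N k
      = (Mtrans F N k)ᵀ * (Ctrans F M N k)⁻¹ := inv_Gcov_mul_GkN (hM k) hPSD
    _ = (F (k + 1))ᵀ * (M (k + 1))⁻¹ * GkN F M N (k + 1) := by
      rw [GkN_succ hkN hM, Mtrans_eq_Mtrans_succ_mul F (by omega), transpose_mul]
      simp only [Matrix.mul_assoc, nonsing_inv_mul_cancel_left _ _ hMdet]
    _ = (Gcov F M N (k + 1) * (M (k + 1))⁻¹ * F (k + 1))ᵀ
          * (Gcov F M N (k + 1))⁻¹ * GkN F M N (k + 1) := by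
      rw [transpose_mul, transpose_mul, hG.transpose_eq, (hM (k + 1)).inv.transpose_eq]
      simp only [Matrix.mul_assoc, mul_nonsing_inv_cancel_left _ _ hGdet]
    _ = _ := by rw [sub_GkN_mul_Mtrans (by omega) (hM (k + 1)) hPSD]
end
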